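/- Let μ > 0, j > 0, and let F be continuous on the strip {z ∈ ℂ : β ≤ Re z ≤ μ, |Im z| ≤ T} for every β ∈ (0, μ) and T > 0, with F holomorphic on its interior. Suppose F is uniformly continuous on each such compact strip. Then σ^{j-1} ∫_{-T}^{T} |F(μ−2σ−iτ) − F(μ)| · |(2σ+iτ)^{-j} − (σ+iτ)^{-j}| dτ → 0 as σ → 0+, for every fixed T > 0. -/

import Mathlib

open Complex Real Filter MeasureTheory Set intervalIntegral

lemma aux_slit (σ τ : ℝ) (hσ : 0 < σ) : ((σ:ℂ) + τ*I) ∈ Complex.slitPlane := by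
  rw [Complex.mem_slitPlane_iff]; left; simp [hσ]

lemma aux_deriv (j τ : ℝ) (s : ℝ) (hs : 0 < s) :
    HasDerivAt (fun y : ℝ => ((y:ℂ) + τ*I) ^ (-(j:ℂ)))
      (-(j:ℂ) * ((s:ℂ) + τ*I) ^ (-(j:ℂ) - 1)) s := by
  have h1 : HasDerivAt (fun z : ℂ => (z + τ*I) ^ (-(j:ℂ)))
      (-(j:ℂ) * ((s:ℂ) + τ*I) ^ (-(j:ℂ) - 1)) (s:ℂ) := by
    have := ((hasDerivAt_id ((s:ℂ))).add_const ((τ:ℂ)*I)).cpow_const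
      (c := -(j:ℂ)) (aux_slit s τ hs)
    simpa using this
  exact h1.comp_ofReal

lemma aux_abs2 (σ τ : ℝ) (hσ : 0 < σ) (s : ℝ) (hsσ : σ ≤ s) :
    Real.sqrt (σ^2+τ^2) ≤ ‖(s:ℂ) + τ*I‖ := by
  rw [Complex.norm_add_mul_I]
  apply Real.sqrt_le_sqrt
  nlinarith

lemma aux_deriv_norm (j τ : ℝ) (hj : 0 < j) (s : ℝ) (σ : ℝ) (hσ : 0 < σ)
    (hsσ : σ ≤ s) :
    ‖-(j:ℂ) * ((s:ℂ) + τ*I) ^ (-(j:ℂ) - 1)‖ ≤ j * (σ^2+τ^2) ^ (-(j+1)/2) := by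
  have hs : 0 < s := lt_of_lt_of_le hσ hsσ
  have hpos : (0:ℝ) < σ^2 + τ^2 := by positivity
  have hsq : (0:ℝ) < Real.sqrt (σ^2+τ^2) := Real.sqrt_pos.mpr hpos
  rw [norm_mul]
  have h1 : ‖-(j:ℂ)‖ = j := by
    simpa using abs_of_pos hj
  rw [h1]
  have h2 : (-(j:ℂ) - 1) = ((-(j+1) : ℝ) : ℂ) := by push_cast; ring
  rw [h2, Complex.norm_cpow_real]
  gcongr
  have h3 := Real.rpow_le_rpow_of_nonpos hsq (aux_abs2 σ τ hσ s hsσ)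
    (by linarith : -(j+1) ≤ 0)
  calc ‖(s:ℂ) + τ*I‖ ^ (-(j+1)) ≤ Real.sqrt (σ^2+τ^2) ^ (-(j+1)) := h3
    _ = (σ^2+τ^2) ^ (-(j+1)/2) := by
        rw [Real.sqrt_eq_rpow, ← Real.rpow_mul hpos.le]
        ring_nf

/-- The mean value estimate for the difference of powers. -/
lemma aux_P (j : ℝ) (hj : 0 < j) (σ τ : ℝ) (hσ : 0 < σ) :
    ‖(2*(σ:ℂ) + τ*I) ^ (-(j:ℂ)) - ((σ:ℂ) + τ*I) ^ (-(j:ℂ))‖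
      ≤ j * (σ^2+τ^2) ^ (-(j+1)/2) * σ := by
  set C := j * (σ^2+τ^2) ^ (-(j+1)/2) with hC
  have key := norm_image_sub_le_of_norm_deriv_le_segment'
    (f := fun y : ℝ => ((y:ℂ) + τ*I) ^ (-(j:ℂ)))
    (f' := fun y : ℝ => -(j:ℂ) * ((y:ℂ) + τ*I) ^ (-(j:ℂ) - 1))
    (a := σ) (b := 2*σ) (C := C)
    (fun x hx => (aux_deriv j τ x (lt_of_lt_of_le hσ hx.1)).hasDerivWithinAt)
    (fun x hx => aux_deriv_norm j τ hj x σ hσ hx.1)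
    (2*σ) (by constructor <;> linarith)
  have e : ((2*σ : ℝ):ℂ) = 2*(σ:ℂ) := by push_cast; ring
  rw [e] at key
  calc ‖(2*(σ:ℂ) + τ*I) ^ (-(j:ℂ)) - ((σ:ℂ) + τ*I) ^ (-(j:ℂ))‖
      ≤ C * (2*σ - σ) := key
    _ = C * σ := by ring

lemma aux_mono (j σ τ a : ℝ) (hj : 0 < j) (ha : 0 < a) (h : a^2 ≤ σ^2+τ^2) :
    (σ^2+τ^2) ^ (-(j+1)/2) ≤ a ^ (-(j+1)) := by
  have h2 : ((a^2 : ℝ)) ^ (-(j+1)/2) = a ^ (-(j+1)) := by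
    rw [← Real.rpow_natCast a 2, ← Real.rpow_mul ha.le]
    congr 1; ring
  rw [← h2]
  exact Real.rpow_le_rpow_of_nonpos (by positivity) h (by linarith)

lemma aux_cont_cpow (j c : ℝ) (hc : 0 < c) :
    Continuous fun τ : ℝ => ((c:ℂ) + τ*I) ^ (-(j:ℂ)) := by
  rw [continuous_iff_continuousAt]
  intro τ
  have h1 : ContinuousAt (fun τ : ℝ => (c:ℂ) + τ*I) τ := by fun_prop
  exact ContinuousAt.comp (f := fun τ:ℝ => (c:ℂ)+τ*I)
    (continuousAt_cpow_const (aux_slit c τ hc)) h1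

lemma aux_int_pos (c e a b : ℝ) (ha : 0 < a) (hb : 0 < b) :
    IntervalIntegrable (fun τ : ℝ => c * τ ^ e) MeasureTheory.volume a b := by
  apply ContinuousOn.intervalIntegrable
  apply continuousOn_const.mul
  intro x hx
  have hx0 : 0 < x := by
    rcases Set.mem_uIcc.mp hx with ⟨h1, _⟩ | ⟨h1, _⟩ <;> linarith
  exact (Real.continuousAt_rpow_const x e (Or.inl hx0.ne')).continuousWithinAt

/-- Tail estimate on a positive interval. -/
lemma aux_tail (g : ℝ → ℝ) (j σ d a b : ℝ) (hj : 0 < j) (hσ : 0 < σ) (ha : 0 < a)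
    (hab : a ≤ b) (hd : 0 ≤ d) (hg : IntervalIntegrable g MeasureTheory.volume a b)
    (hgb : ∀ τ ∈ Set.Icc a b, g τ ≤ d * (j * τ^(-(j+1)) * σ)) :
    ∫ τ in a..b, g τ ≤ d * σ * a^(-j) := by
  have hb : 0 < b := lt_of_lt_of_le ha hab
  have h1 : ∫ τ in a..b, g τ ≤ ∫ τ in a..b, (d*j*σ) * τ^(-(j+1)) :=
    intervalIntegral.integral_mono_on hab hg (aux_int_pos _ _ _ _ ha hb)
      (fun τ hτ => (hgb τ hτ).trans_eq (by ring))
  have hne : -(j+1) ≠ -1 := by intro h; linarith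
  have hnm : (0:ℝ) ∉ Set.uIcc a b := by
    intro h
    rcases Set.mem_uIcc.mp h with ⟨h1, _⟩ | ⟨h1, _⟩ <;> linarith
  have h2 : ∫ τ in a..b, (d*j*σ) * τ^(-(j+1))
      = (d*j*σ) * ((b^(-j) - a^(-j))/(-j)) := by
    rw [intervalIntegral.integral_const_mul, integral_rpow (Or.inr ⟨hne, hnm⟩)]
    have h3 : -(j+1)+1 = -j := by ring
    rw [h3]
  have h4 : (d*j*σ) * ((b^(-j) - a^(-j))/(-j)) = d*σ*(a^(-j) - b^(-j)) := by
    field_simp [hj.ne']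
    ring
  have h5 : 0 ≤ b^(-j) := Real.rpow_nonneg hb.le _
  have h6 : d*σ*(a^(-j) - b^(-j)) ≤ d*σ*a^(-j) := by
    have : a^(-j) - b^(-j) ≤ a^(-j) := by linarith
    have hdsig : 0 ≤ d*σ := by positivity
    exact mul_le_mul_of_nonneg_left this hdsig
  linarith [h1, h2 ▸ h4 ▸ h6]

lemma aux_sigma (σ : ℝ) (hσ : 0 < σ) (e : ℝ) : σ * σ ^ e = σ ^ (e+1) := by
  rw [Real.rpow_add hσ, Real.rpow_one]; ring

set_option maxHeartbeats 1000000 in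
/-- the term B_j(σ) tends to 0 as σ → 0+. -/
theorem Bj_tendsto_zero (μ j : ℝ) (hμ : 0 < μ) (hj : 0 < j) (F : ℂ → ℂ)
    (hFanal : DifferentiableOn ℂ F {z : ℂ | 0 < z.re ∧ z.re < μ})
    (hFcont : ContinuousOn F {z : ℂ | 0 < z.re ∧ z.re ≤ μ})
    (hFunif : ∀ β T : ℝ, 0 < β → β < μ → 0 < T →
      UniformContinuousOn F {z : ℂ | β ≤ z.re ∧ z.re ≤ μ ∧ |z.im| ≤ T})
    (T : ℝ) (hT : 0 < T) :
    Tendsto (fun σ : ℝ =>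
        σ ^ (j - 1) * ∫ τ in (-T)..T,
          ‖F ((μ : ℂ) - 2 * σ - τ * I) - F (μ : ℂ)‖ *
          ‖(2 * (σ : ℂ) + τ * I) ^ (-(j : ℂ))
            - ((σ : ℂ) + τ * I) ^ (-(j : ℂ))‖)
      (nhdsWithin 0 (Set.Ioi 0)) (nhds 0) := by
  -- re/im computations
  have hre : ∀ σ τ : ℝ, ((μ:ℂ) - 2*(σ:ℂ) - (τ:ℂ)*I).re = μ - 2*σ := by
    intro σ τ; simp
  have him : ∀ σ τ : ℝ, ((μ:ℂ) - 2*(σ:ℂ) - (τ:ℂ)*I).im = -τ := by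
    intro σ τ; simp
  -- boundedness constant
  obtain ⟨C, hC0, hCb⟩ : ∃ C : ℝ, 0 ≤ C ∧ ∀ σ τ : ℝ, 0 < σ → σ ≤ μ/4 → |τ| ≤ T →
      ‖F ((μ:ℂ) - 2*(σ:ℂ) - (τ:ℂ)*I) - F (μ:ℂ)‖ ≤ C := by
    set K : Set ℂ := Complex.re ⁻¹' Set.Icc (μ/2) μ ∩ Complex.im ⁻¹' Set.Icc (-T) T with hK
    have hKc : IsCompact K := by
      apply Metric.isCompact_of_isClosed_isBounded
      · exact (isClosed_Icc.preimage Complex.continuous_re).inter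
          (isClosed_Icc.preimage Complex.continuous_im)
      · rw [isBounded_iff_forall_norm_le]
        refine ⟨μ + T, fun z hz => ?_⟩
        obtain ⟨⟨h1, h2⟩, h3, h4⟩ := hz
        calc ‖z‖ = ‖z‖ := rfl
          _ ≤ |z.re| + |z.im| := Complex.norm_le_abs_re_add_abs_im z
          _ ≤ μ + T := by
              have : |z.re| ≤ μ := abs_le.mpr ⟨by linarith, h2⟩
              have : |z.im| ≤ T := abs_le.mpr ⟨h3, h4⟩
              have h5 : |z.re| ≤ μ := abs_le.mpr ⟨by linarith, h2⟩
              linarith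
    have hKsub : K ⊆ {z : ℂ | 0 < z.re ∧ z.re ≤ μ} := by
      rintro z ⟨⟨h1, h2⟩, _⟩
      exact ⟨by linarith, h2⟩
    obtain ⟨C₀, hC₀⟩ := hKc.exists_bound_of_continuousOn (hFcont.mono hKsub)
    have hμK : (μ:ℂ) ∈ K := by
      constructor
      · rw [Set.mem_preimage]
        simp only [Complex.ofReal_re, Set.mem_Icc]
        exact ⟨by linarith, le_refl μ⟩
      · rw [Set.mem_preimage]
        simp only [Complex.ofReal_im, Set.mem_Icc]
        exact ⟨by linarith, hT.le⟩
    have hFμ : ‖F (μ:ℂ)‖ ≤ C₀ := hC₀ _ hμK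
    refine ⟨C₀ + ‖F (μ:ℂ)‖, ?_, ?_⟩
    · have : (0:ℝ) ≤ ‖F (μ:ℂ)‖ := norm_nonneg _
      have h2 : (0:ℝ) ≤ ‖F (μ:ℂ)‖ := by positivity
      linarith
    · intro σ τ hσ hσμ hτ
      have hzK : ((μ:ℂ) - 2*(σ:ℂ) - (τ:ℂ)*I) ∈ K := by
        constructor
        · rw [Set.mem_preimage, hre]
          exact ⟨by linarith, by linarith⟩
        · rw [Set.mem_preimage, him]
          rw [abs_le] at hτ
          exact ⟨by linarith [hτ.2], by linarith [hτ.1]⟩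
      calc ‖F ((μ:ℂ) - 2*(σ:ℂ) - (τ:ℂ)*I) - F (μ:ℂ)‖
          ≤ ‖F ((μ:ℂ) - 2*(σ:ℂ) - (τ:ℂ)*I)‖ + ‖F (μ:ℂ)‖ := by
            simpa using
              norm_sub_le (F ((μ:ℂ) - 2*(σ:ℂ) - (τ:ℂ)*I)) (F (μ:ℂ))
        _ ≤ C₀ + ‖F (μ:ℂ)‖ := by
            have := hC₀ _ hzK
            linarith
  rw [Metric.tendsto_nhdsWithin_nhds]
  intro ε' hε'
  set ε := ε' / (2*(2*j+2)) with hεdef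
  have hεpos : 0 < ε := by positivity
  -- continuity at μ
  have hcμ : ContinuousWithinAt F {z : ℂ | 0 < z.re ∧ z.re ≤ μ} (μ:ℂ) :=
    hFcont (μ:ℂ) ⟨by simpa using hμ, by simp⟩
  rw [Metric.continuousWithinAt_iff] at hcμ
  obtain ⟨δF, hδF, hδFprop⟩ := hcμ ε hεpos
  set δ := min (min 1 (μ/8)) (min (T^2) (min (δF^2/5) ((ε'/(4*C+4)) ^ ((2:ℝ)/j)))) with hδdef
  have hδpos : 0 < δ := by
    apply lt_min (lt_min one_pos (by linarith))
    apply lt_min (by positivity)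
    apply lt_min (by positivity)
    positivity
  refine ⟨δ, hδpos, ?_⟩
  intro σ hσmem hσd
  have hσ : 0 < σ := hσmem
  rw [Real.dist_eq, sub_zero, abs_of_pos hσ] at hσd
  have hσ1 : σ ≤ 1 := le_of_lt (lt_of_lt_of_le hσd (le_trans (min_le_left _ _) (min_le_left _ _)))
  have hσμ8 : σ < μ/8 := lt_of_lt_of_le hσd (le_trans (min_le_left _ _) (min_le_right _ _))
  have hσT : σ ≤ T^2 := le_of_lt (lt_of_lt_of_le hσd (le_trans (min_le_right _ _) (min_le_left _ _)))
  have hσδF : σ < δF^2/5 := lt_of_lt_of_le hσd (le_trans (min_le_right _ _)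
    (le_trans (min_le_right _ _) (min_le_left _ _)))
  have hσε : σ < (ε'/(4*C+4)) ^ ((2:ℝ)/j) := lt_of_lt_of_le hσd (le_trans (min_le_right _ _)
    (le_trans (min_le_right _ _) (min_le_right _ _)))
  have hσμ4 : σ ≤ μ/4 := by linarith
  set r := Real.sqrt σ with hrdef
  have hr : 0 < r := Real.sqrt_pos.mpr hσ
  have hσr : σ ≤ r := by
    rw [hrdef]
    nlinarith [Real.sq_sqrt hσ.le, Real.sqrt_nonneg σ, Real.sqrt_le_sqrt hσ1,
      Real.sqrt_one]
  have hrT : r ≤ T := by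
    rw [hrdef]
    calc Real.sqrt σ ≤ Real.sqrt (T^2) := Real.sqrt_le_sqrt hσT
      _ = T := Real.sqrt_sq hT.le
  -- the integrand
  set g : ℝ → ℝ := fun τ => ‖F ((μ : ℂ) - 2 * σ - τ * I) - F (μ : ℂ)‖ *
      ‖(2 * (σ : ℂ) + τ * I) ^ (-(j : ℂ)) - ((σ : ℂ) + τ * I) ^ (-(j : ℂ))‖
    with hgdef
  have hgnonneg : ∀ τ, 0 ≤ g τ := fun τ => mul_nonneg (by positivity) (by positivity)
  -- continuity of g
  have hgcont : Continuous g := by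
    apply Continuous.mul
    · apply continuous_norm.comp
      apply Continuous.sub _ continuous_const
      apply hFcont.comp_continuous (by fun_prop)
      intro τ
      rw [Set.mem_setOf_eq, hre]
      exact ⟨by linarith, by linarith⟩
    · apply continuous_norm.comp
      have e1 : ∀ τ : ℝ, (2*(σ:ℂ) + (τ:ℂ)*I) = (((2*σ:ℝ):ℂ) + (τ:ℂ)*I) := by
        intro τ; push_cast; ring
      have c1 := aux_cont_cpow j (2*σ) (by linarith)
      have c2 := aux_cont_cpow j σ hσ
      apply Continuous.sub
      · simpa [← e1] using c1
      · exact c2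
  have hgint : ∀ a b : ℝ, IntervalIntegrable g MeasureTheory.volume a b :=
    fun a b => hgcont.intervalIntegrable a b
  -- bound near the center
  have hD_mid : ∀ τ : ℝ, |τ| ≤ r →
      ‖F ((μ:ℂ) - 2*(σ:ℂ) - (τ:ℂ)*I) - F (μ:ℂ)‖ ≤ ε := by
    intro τ hτ
    have hτ2 : τ^2 ≤ σ := by
      have h1 : |τ|^2 ≤ r^2 := by nlinarith [abs_nonneg τ]
      rw [_root_.sq_abs] at h1
      rwa [hrdef, Real.sq_sqrt hσ.le] at h1
    have hmem : ((μ:ℂ) - 2*(σ:ℂ) - (τ:ℂ)*I) ∈ {z : ℂ | 0 < z.re ∧ z.re ≤ μ} := by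
      rw [Set.mem_setOf_eq, hre]
      exact ⟨by linarith, by linarith⟩
    have hdist : dist ((μ:ℂ) - 2*(σ:ℂ) - (τ:ℂ)*I) (μ:ℂ) < δF := by
      rw [Complex.dist_eq]
      have e2 : ((μ:ℂ) - 2*(σ:ℂ) - (τ:ℂ)*I) - (μ:ℂ) = -((((2*σ:ℝ)):ℂ) + (τ:ℂ)*I) := by
        push_cast; ring
      rw [e2, norm_neg, Complex.norm_add_mul_I]
      rw [Real.sqrt_lt' hδF]
      nlinarith
    have := hδFprop hmem hdist
    rw [Complex.dist_eq] at this
    exact this.le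
  have hD_all : ∀ τ : ℝ, |τ| ≤ T →
      ‖F ((μ:ℂ) - 2*(σ:ℂ) - (τ:ℂ)*I) - F (μ:ℂ)‖ ≤ C :=
    fun τ h => hCb σ τ hσ hσμ4 h
  have hP_all : ∀ τ a : ℝ, 0 < a → a^2 ≤ σ^2+τ^2 →
      ‖(2*(σ:ℂ) + (τ:ℂ)*I) ^ (-(j:ℂ)) - ((σ:ℂ) + (τ:ℂ)*I) ^ (-(j:ℂ))‖
        ≤ j * a^(-(j+1)) * σ := by
    intro τ a ha h
    refine (aux_P j hj σ τ hσ).trans ?_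
    have := aux_mono j σ τ a hj ha h
    exact mul_le_mul_of_nonneg_right (mul_le_mul_of_nonneg_left this hj.le) hσ.le
  -- middle piece
  have hmid : ∫ τ in (-σ)..σ, g τ ≤ 2*j*ε*σ^(1-j) := by
    have ptw : ∀ τ ∈ Set.Icc (-σ) σ, g τ ≤ ε * (j * σ^(-(j+1)) * σ) := by
      intro τ hτ
      have hτr : |τ| ≤ r := le_trans (abs_le.mpr ⟨hτ.1, hτ.2⟩) hσr
      exact mul_le_mul (hD_mid τ hτr) (hP_all τ σ hσ (by linarith [sq_nonneg τ]))
        (by positivity) hεpos.le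
    calc ∫ τ in (-σ)..σ, g τ ≤ ∫ _τ in (-σ)..σ, ε * (j * σ^(-(j+1)) * σ) :=
          intervalIntegral.integral_mono_on (by linarith) (hgint _ _)
            intervalIntegrable_const ptw
      _ = (σ - (-σ)) • (ε * (j * σ^(-(j+1)) * σ)) := intervalIntegral.integral_const _
      _ = 2*j*ε*(σ * σ^(-(j+1)) * σ) := by simp [smul_eq_mul]; ring
      _ = 2*j*ε*σ^(1-j) := by
          have e5 : σ * σ^(-(j+1)) * σ = σ^(1-j) := by
            rw [aux_sigma σ hσ, mul_comm, aux_sigma σ hσ]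
            congr 1; ring
          rw [e5]
  -- right inner piece
  have hp2 : ∫ τ in σ..r, g τ ≤ ε*σ*σ^(-j) := by
    apply aux_tail g j σ ε σ r hj hσ hσ hσr hεpos.le (hgint σ r)
    intro τ hτ
    have hτ0 : 0 < τ := lt_of_lt_of_le hσ hτ.1
    have hτr : |τ| ≤ r := by rw [abs_of_pos hτ0]; exact hτ.2
    exact mul_le_mul (hD_mid τ hτr) (hP_all τ τ hτ0 (by linarith [sq_nonneg σ]))
      (by positivity) hεpos.le
  -- right outer piece
  have hp4 : ∫ τ in r..T, g τ ≤ C*σ*r^(-j) := by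
    apply aux_tail g j σ C r T hj hσ hr hrT hC0 (hgint r T)
    intro τ hτ
    have hτ0 : 0 < τ := lt_of_lt_of_le hr hτ.1
    have hτT : |τ| ≤ T := by rw [abs_of_pos hτ0]; exact hτ.2
    exact mul_le_mul (hD_all τ hτT) (hP_all τ τ hτ0 (by linarith [sq_nonneg σ]))
      (by positivity) hC0
  -- left pieces via reflection
  have hneg : ∀ a b : ℝ, (∫ τ in a..b, g (-τ)) = ∫ τ in (-b)..(-a), g τ :=
    fun a b => intervalIntegral.integral_comp_neg (fun x => g x)
  have hgnegint : ∀ a b : ℝ, IntervalIntegrable (fun τ => g (-τ)) MeasureTheory.volume a b :=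
    fun a b => (hgcont.comp continuous_neg).intervalIntegrable a b
  have hp3 : ∫ τ in (-r)..(-σ), g τ ≤ ε*σ*σ^(-j) := by
    rw [← hneg σ r]
    apply aux_tail (fun τ => g (-τ)) j σ ε σ r hj hσ hσ hσr hεpos.le (hgnegint σ r)
    intro τ hτ
    have hτ0 : 0 < τ := lt_of_lt_of_le hσ hτ.1
    have hτr : |(-τ)| ≤ r := by rw [abs_neg, abs_of_pos hτ0]; exact hτ.2
    have e6 : ((-τ:ℝ):ℂ) = -(τ:ℂ) := by push_cast; ring
    refine mul_le_mul ?_ ?_ (by positivity) hεpos.le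
    · have := hD_mid (-τ) hτr
      simpa only [e6] using this
    · have := hP_all (-τ) τ hτ0 (by rw [neg_sq]; linarith [sq_nonneg σ])
      simpa only [e6] using this
  have hp5 : ∫ τ in (-T)..(-r), g τ ≤ C*σ*r^(-j) := by
    rw [← hneg r T]
    apply aux_tail (fun τ => g (-τ)) j σ C r T hj hσ hr hrT hC0 (hgnegint r T)
    intro τ hτ
    have hτ0 : 0 < τ := lt_of_lt_of_le hr hτ.1
    have hτT : |(-τ)| ≤ T := by rw [abs_neg, abs_of_pos hτ0]; exact hτ.2
    have e6 : ((-τ:ℝ):ℂ) = -(τ:ℂ) := by push_cast; ring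
    refine mul_le_mul ?_ ?_ (by positivity) hC0
    · have := hD_all (-τ) hτT
      simpa only [e6] using this
    · have := hP_all (-τ) τ hτ0 (by rw [neg_sq]; linarith [sq_nonneg σ])
      simpa only [e6] using this
  -- combine
  have hsplit : (∫ τ in (-T)..T, g τ) = (∫ τ in (-T)..(-r), g τ) + ((∫ τ in (-r)..(-σ), g τ)
      + ((∫ τ in (-σ)..σ, g τ) + ((∫ τ in σ..r, g τ) + (∫ τ in r..T, g τ)))) := by
    rw [intervalIntegral.integral_add_adjacent_intervals (hgint σ r) (hgint r T),
        intervalIntegral.integral_add_adjacent_intervals (hgint (-σ) σ) (hgint σ T),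
        intervalIntegral.integral_add_adjacent_intervals (hgint (-r) (-σ)) (hgint (-σ) T),
        intervalIntegral.integral_add_adjacent_intervals (hgint (-T) (-r)) (hgint (-r) T)]
  have hI : (∫ τ in (-T)..T, g τ) ≤ 2*j*ε*σ^(1-j) + 2*(ε*σ*σ^(-j)) + 2*(C*σ*r^(-j)) := by
    rw [hsplit]; linarith
  -- final algebra
  have e3 : r^(-j) = σ^(-(j/2)) := by
    rw [hrdef, Real.sqrt_eq_rpow, ← Real.rpow_mul hσ.le]
    congr 1; ring
  have f1 : σ^(j-1)*σ^(1-j) = 1 := by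
    rw [← Real.rpow_add hσ]; norm_num
  have f2 : σ^(j-1)*(σ*σ^(-j)) = 1 := by
    rw [aux_sigma σ hσ, ← Real.rpow_add hσ]
    norm_num
  have f3 : σ^(j-1)*(σ*σ^(-(j/2))) = σ^(j/2) := by
    rw [aux_sigma σ hσ, ← Real.rpow_add hσ]
    congr 1; ring
  have hfinal : σ^(j-1) * (2*j*ε*σ^(1-j) + 2*(ε*σ*σ^(-j)) + 2*(C*σ*r^(-j)))
      = (2*j+2)*ε + 2*C*σ^(j/2) := by
    rw [e3]
    linear_combination (2*j*ε)*f1 + (2*ε)*f2 + (2*C)*f3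
  have hIone : σ^(j-1) * (∫ τ in (-T)..T, g τ) ≤ (2*j+2)*ε + 2*C*σ^(j/2) := by
    calc σ^(j-1) * (∫ τ in (-T)..T, g τ)
        ≤ σ^(j-1) * (2*j*ε*σ^(1-j) + 2*(ε*σ*σ^(-j)) + 2*(C*σ*r^(-j))) :=
          mul_le_mul_of_nonneg_left hI (Real.rpow_nonneg hσ.le _)
      _ = (2*j+2)*ε + 2*C*σ^(j/2) := hfinal
  have hε1 : (2*j+2)*ε = ε'/2 := by
    rw [hεdef]; field_simp
  have hσj2 : σ^(j/2) ≤ ε'/(4*C+4) := by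
    have h0 : σ^(j/2) < ((ε'/(4*C+4))^((2:ℝ)/j))^(j/2) :=
      Real.rpow_lt_rpow hσ.le hσε (by positivity)
    have h1 : ((ε'/(4*C+4))^((2:ℝ)/j))^(j/2) = ε'/(4*C+4) := by
      rw [← Real.rpow_mul (by positivity)]
      rw [show (2:ℝ)/j * (j/2) = 1 by field_simp]
      exact Real.rpow_one _
    rw [h1] at h0
    exact h0.le
  have hC2 : 2*C*σ^(j/2) < ε'/2 := by
    have h2 : 2*C*σ^(j/2) ≤ 2*C*(ε'/(4*C+4)) :=
      mul_le_mul_of_nonneg_left hσj2 (by positivity)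
    have h3 : 2*C*(ε'/(4*C+4)) < ε'/2 := by
      have h4 : 2*C*(ε'/(4*C+4)) = (2*C*ε')/(4*C+4) := by ring
      rw [h4, div_lt_div_iff₀ (by positivity) two_pos]
      nlinarith
    linarith
  have hnn : 0 ≤ σ^(j-1) * (∫ τ in (-T)..T, g τ) :=
    mul_nonneg (Real.rpow_nonneg hσ.le _)
      (intervalIntegral.integral_nonneg (by linarith) (fun u _ => hgnonneg u))
  rw [Real.dist_eq, sub_zero, _root_.abs_of_nonneg hnn]
  linarith
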